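/- arXiv:2303.11588 — 5 statements merged into one kernel-verified Lean document; each statement's English description precedes it below -/
import Mathlib

section
/- Let l be a positive integer with l ≡ 1 (mod 4) and let q be a positive integer. Then: τ(χ^{(4l)}, q) = 0 if q is odd; τ(χ^{(4l)}, q) = −2·τ(χ_l, q) if q ≡ 2 (mod 4); and τ(χ^{(4l)}, q) = 2·τ(χ_l, q) if q ≡ 0 (mod 4). -/
open Complex

/-- The Gauss sum `τ(χ, q) = ∑_{j=0}^{n-1} χ(j) e(jq/n)` of a function `χ` regarded as a
character modulo `n`, at the integer `q`, where `e(z) = exp(2πiz)`. -/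
noncomputable def tauChar (n : ℕ) (χ : ℕ → ℂ) (q : ℤ) : ℂ :=
  ∑ j ∈ Finset.range n, χ j * Complex.exp (2 * Real.pi * Complex.I * j * q / n)

/-- The quadratic character `χ_n = (·/n)` given by the Jacobi symbol, for odd positive `n`. -/
noncomputable def chiJacobi (n : ℕ) : ℕ → ℂ := fun m => (jacobiSym m n : ℂ)

/-- The character `χ^{(4m)}` modulo `4m`: it vanishes on even integers and takes the value
given by the Jacobi symbol `(m/j)` at odd `j`. -/
noncomputable def chi4m (m : ℕ) : ℕ → ℂ := fun j => if Odd j then (jacobiSym m j : ℂ) else 0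

private lemma exp_root (n : ℕ) (hn : 0 < n) :
    Complex.exp (2 * Real.pi * Complex.I / n) ^ n = 1 := by
  rw [← Complex.exp_nat_mul]
  have hne : (n : ℂ) ≠ 0 := Nat.cast_ne_zero.mpr hn.ne'
  have h : (n : ℂ) * (2 * Real.pi * Complex.I / n) = 2 * Real.pi * Complex.I := by
    field_simp
  rw [h, Complex.exp_two_pi_mul_I]

private lemma pow_congr_mod {x : ℂ} {n : ℕ} (h : x ^ n = 1) {a b : ℕ} (hab : a % n = b % n) :
    x ^ a = x ^ b := by
  rw [pow_eq_pow_mod a h, pow_eq_pow_mod b h, hab]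

private lemma term_exp (n : ℕ) (j q : ℕ) :
    Complex.exp (2 * Real.pi * Complex.I * (j : ℂ) * (((q : ℕ) : ℤ) : ℂ) / (n : ℂ))
      = Complex.exp (2 * Real.pi * Complex.I / n) ^ (j * q) := by
  rw [← Complex.exp_nat_mul]
  congr 1
  push_cast
  ring

private lemma chi4m_eq (l : ℕ) (hl4 : l % 4 = 1) (j : ℕ) :
    chi4m l j = if Odd j then (jacobiSym j l : ℂ) else 0 := by
  unfold chi4m
  by_cases hj : Odd j
  · simp only [hj, if_true]
    rw [jacobiSym.quadratic_reciprocity_one_mod_four hl4 hj]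
  · simp [hj]

private lemma G_eq (l : ℕ) (hl : 0 < l) (hl2 : l % 2 = 1) (t m : ℕ)
    (hm : 4 * t % l = m % l) :
    ∑ k ∈ Finset.range l,
        (jacobiSym k l : ℂ) * Complex.exp (2 * Real.pi * Complex.I / l) ^ (k * m)
      = ∑ k ∈ Finset.range l,
        (jacobiSym k l : ℂ) * Complex.exp (2 * Real.pi * Complex.I / l) ^ (k * t) := by
  haveI : NeZero l := ⟨hl.ne'⟩
  set η := Complex.exp (2 * Real.pi * Complex.I / l) with hη
  have hroot : η ^ l = 1 := exp_root l hl
  have hcop2 : Nat.Coprime 2 l := Nat.coprime_two_left.mpr (Nat.odd_iff.mpr hl2)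
  have hcop : Nat.Coprime 4 l := by
    have h : Nat.Coprime (2 * 2) l := Nat.Coprime.mul hcop2 hcop2
    simpa using h
  set u : (ZMod l)ˣ := ZMod.unitOfCoprime 4 hcop with hu
  have hucoe : (u : ZMod l) = ((4 : ℕ) : ZMod l) := ZMod.coe_unitOfCoprime 4 hcop
  set F : ZMod l → ℂ := fun x => (jacobiSym x.val l : ℂ) * η ^ (x.val * t) with hF
  have step1 : ∀ k : ℕ, η ^ (k * m) = η ^ (k * (4 * t)) := by
    intro k
    exact pow_congr_mod hroot (Nat.ModEq.mul_left k hm.symm)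
  have step2 : ∑ k ∈ Finset.range l, (jacobiSym k l : ℂ) * η ^ (k * (4 * t))
      = ∑ x : ZMod l, F ((u : ZMod l) * x) := by
    refine Finset.sum_nbij' (fun k => ((k : ℕ) : ZMod l)) (fun x => x.val)
      (fun a _ => Finset.mem_univ _) (fun x _ => Finset.mem_range.mpr x.val_lt)
      (fun a ha => ZMod.val_cast_of_lt (Finset.mem_range.mp ha))
      (fun x _ => ZMod.natCast_rightInverse x) ?_
    intro k hk
    have hmul : (u : ZMod l) * ((k : ℕ) : ZMod l) = ((4 * k : ℕ) : ZMod l) := by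
      rw [hucoe]; push_cast; ring
    have hval : ((u : ZMod l) * ((k : ℕ) : ZMod l)).val = (4 * k) % l := by
      rw [hmul, ZMod.val_natCast]
    simp only [hF, hval]
    have hJ : jacobiSym (((4 * k) % l : ℕ) : ℤ) l = jacobiSym ((k : ℕ) : ℤ) l := by
      have h1 : jacobiSym (((4 * k) % l : ℕ) : ℤ) l = jacobiSym ((4 * k : ℕ) : ℤ) l := by
        apply jacobiSym.mod_left'
        push_cast
        exact Int.emod_emod_of_dvd _ dvd_rfl
      rw [h1, show ((4 * k : ℕ) : ℤ) = 4 * (k : ℤ) by push_cast; ring, jacobiSym.mul_left]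
      have h4 : jacobiSym (4 : ℤ) l = 1 := by
        rw [show (4 : ℤ) = 2 ^ 2 by norm_num]
        refine jacobiSym.sq_one' ?_
        have hg : Nat.gcd 2 l = 1 := hcop2
        simpa [Int.gcd] using hg
      rw [h4, one_mul]
    have hpow : η ^ ((4 * k) % l * t) = η ^ (k * (4 * t)) := by
      apply pow_congr_mod hroot
      have h1 : (4 * k) % l * t % l = 4 * k * t % l :=
        Nat.ModEq.mul_right t (Nat.mod_modEq (4 * k) l)
      rw [h1]
      congr 1
      ring
    rw [hJ, hpow]
  have step3 : ∑ x : ZMod l, F ((u : ZMod l) * x) = ∑ x : ZMod l, F x := by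
    have h := Equiv.sum_comp (Units.mulLeft u) F
    simpa [Units.mulLeft] using h
  have step4 : ∑ x : ZMod l, F x
      = ∑ k ∈ Finset.range l, (jacobiSym k l : ℂ) * η ^ (k * t) := by
    refine (Finset.sum_nbij' (fun k => ((k : ℕ) : ZMod l)) (fun x => x.val)
      (fun a _ => Finset.mem_univ _) (fun x _ => Finset.mem_range.mpr x.val_lt)
      (fun a ha => ZMod.val_cast_of_lt (Finset.mem_range.mp ha))
      (fun x _ => ZMod.natCast_rightInverse x) ?_).symm
    intro k hk
    simp only [hF, ZMod.val_cast_of_lt (Finset.mem_range.mp hk)]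
  calc ∑ k ∈ Finset.range l, (jacobiSym k l : ℂ) * η ^ (k * m)
      = ∑ k ∈ Finset.range l, (jacobiSym k l : ℂ) * η ^ (k * (4 * t)) :=
        Finset.sum_congr rfl fun k _ => by rw [step1 k]
    _ = ∑ x : ZMod l, F ((u : ZMod l) * x) := step2
    _ = ∑ x : ZMod l, F x := step3
    _ = ∑ k ∈ Finset.range l, (jacobiSym k l : ℂ) * η ^ (k * t) := step4

theorem gauss_sum_chi_four_l_of_l_one_mod_four (l : ℕ) (hl : 0 < l) (hl4 : l % 4 = 1)
    (q : ℕ) (hq : 0 < q) :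
    (¬ 2 ∣ q → tauChar (4 * l) (chi4m l) q = 0) ∧
    (q % 4 = 2 → tauChar (4 * l) (chi4m l) q = -2 * tauChar l (chiJacobi l) q) ∧
    (q % 4 = 0 → tauChar (4 * l) (chi4m l) q = 2 * tauChar l (chiJacobi l) q) := by
  have hl2 : l % 2 = 1 := by omega
  have hln : (l : ℂ) ≠ 0 := Nat.cast_ne_zero.mpr hl.ne'
  set ζ := Complex.exp (2 * Real.pi * Complex.I / ((4 * l : ℕ) : ℂ)) with hζ
  set η := Complex.exp (2 * Real.pi * Complex.I / (l : ℂ)) with hη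
  have h4l0 : 0 < 4 * l := by omega
  have hζ2l : ζ ^ (2 * l) = -1 := by
    rw [hζ, ← Complex.exp_nat_mul]
    have h : ((2 * l : ℕ) : ℂ) * (2 * Real.pi * Complex.I / ((4 * l : ℕ) : ℂ))
        = Real.pi * Complex.I := by
      push_cast
      field_simp
      ring
    rw [h, Complex.exp_pi_mul_I]
  have hη4 : ζ ^ 4 = η := by
    rw [hζ, hη, ← Complex.exp_nat_mul]
    congr 1
    push_cast
    field_simp
  have hS : tauChar (4 * l) (chi4m l) q
      = ∑ j ∈ Finset.range (4 * l), chi4m l j * ζ ^ (j * q) := by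
    unfold tauChar
    exact Finset.sum_congr rfl fun j _ => by rw [term_exp (4 * l) j q, ← hζ]
  have hTl : tauChar l (chiJacobi l) q
      = ∑ k ∈ Finset.range l, (jacobiSym k l : ℂ) * η ^ (k * q) := by
    unfold tauChar chiJacobi
    exact Finset.sum_congr rfl fun k _ => by rw [term_exp l k q, ← hη]
  set T2 := ∑ j ∈ Finset.range (2 * l), chi4m l j * ζ ^ (j * q) with hT2def
  have hper : ∀ j, chi4m l (2 * l + j) * ζ ^ ((2 * l + j) * q)
      = (-1) ^ q * (chi4m l j * ζ ^ (j * q)) := by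
    intro j
    have hodd : Odd (2 * l + j) ↔ Odd j := by
      simp only [Nat.odd_iff]
      omega
    rw [chi4m_eq l hl4, chi4m_eq l hl4]
    have hJ : jacobiSym ((2 * l + j : ℕ) : ℤ) l = jacobiSym ((j : ℕ) : ℤ) l := by
      apply jacobiSym.mod_left'
      push_cast
      rw [show (2 * (l : ℤ) + j) = j + l * 2 by ring, Int.add_mul_emod_self_left]
    have hpow : ζ ^ ((2 * l + j) * q) = (-1) ^ q * ζ ^ (j * q) := by
      rw [add_mul, pow_add, pow_mul, hζ2l]
    by_cases hj : Odd j
    · simp only [if_pos hj, if_pos (hodd.mpr hj), hJ, hpow]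
      ring
    · simp only [if_neg hj, if_neg (fun h => hj (hodd.mp h))]
      ring
  have hS2 : tauChar (4 * l) (chi4m l) q = (1 + (-1) ^ q) * T2 := by
    rw [hS, show 4 * l = 2 * l + 2 * l by ring, Finset.sum_range_add]
    have h : (∑ j ∈ Finset.range (2 * l), chi4m l (2 * l + j) * ζ ^ ((2 * l + j) * q))
        = ∑ j ∈ Finset.range (2 * l), (-1) ^ q * (chi4m l j * ζ ^ (j * q)) :=
      Finset.sum_congr rfl fun j _ => hper j
    rw [h, ← Finset.mul_sum, ← hT2def]
    ring
  have hT2even : ∀ r : ℕ, q = 2 * r →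
      T2 = ∑ k ∈ Finset.range l,
        (if Odd k then (1 : ℂ) else (-1) ^ r) * ((jacobiSym k l : ℂ) * ζ ^ (k * q)) := by
    intro r hr
    have hζl : ζ ^ (l * q) = (-1) ^ r := by
      rw [show l * q = 2 * l * r by rw [hr]; ring, pow_mul, hζ2l]
    rw [hT2def, show 2 * l = l + l from two_mul l, Finset.sum_range_add,
      ← Finset.sum_add_distrib]
    refine Finset.sum_congr rfl fun k _ => ?_
    rw [chi4m_eq l hl4, chi4m_eq l hl4]
    have hoddlk : Odd (l + k) ↔ ¬ Odd k := by
      simp only [Nat.odd_iff]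
      omega
    have hJ : jacobiSym ((l + k : ℕ) : ℤ) l = jacobiSym ((k : ℕ) : ℤ) l := by
      apply jacobiSym.mod_left'
      push_cast
      rw [show ((l : ℤ) + k) = k + l * 1 by ring, Int.add_mul_emod_self_left]
    have hpow : ζ ^ ((l + k) * q) = (-1) ^ r * ζ ^ (k * q) := by
      rw [add_mul, pow_add, hζl]
    by_cases hk : Odd k
    · simp only [if_pos hk, if_neg (fun h => (hoddlk.mp h) hk)]
      ring
    · simp only [if_neg hk, if_pos (hoddlk.mpr hk), hJ, hpow]
      ring
  refine ⟨?_, ?_, ?_⟩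
  · -- q odd
    intro h2
    have hqodd : Odd q := Nat.odd_iff.mpr (by omega)
    rw [hS2, hqodd.neg_one_pow]
    ring
  · -- q ≡ 2 mod 4
    intro hq2
    obtain ⟨r, hr⟩ : ∃ r, q = 2 * r := ⟨q / 2, by omega⟩
    have hrodd : Odd r := Nat.odd_iff.mpr (by omega)
    obtain ⟨m, hm⟩ : ∃ m, q + 2 * l = 4 * m := ⟨(q + 2 * l) / 4, by omega⟩
    have hqeven : (-1 : ℂ) ^ q = 1 := (Nat.even_iff.mpr (by omega)).neg_one_pow
    have hterm : ∀ k : ℕ, (if Odd k then (1 : ℂ) else (-1) ^ r) *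
        ((jacobiSym k l : ℂ) * ζ ^ (k * q)) = -((jacobiSym k l : ℂ) * η ^ (k * m)) := by
      intro k
      have h1 : (if Odd k then (1 : ℂ) else (-1) ^ r) = -(-1) ^ k := by
        by_cases hk : Odd k
        · rw [if_pos hk, hk.neg_one_pow]; ring
        · have hke : Even k := Nat.not_odd_iff_even.mp hk
          rw [if_neg hk, hrodd.neg_one_pow, hke.neg_one_pow]
      have he : 2 * l * k + k * q = 4 * (k * m) := by
        rw [show 2 * l * k + k * q = k * (q + 2 * l) by ring, hm]
        ring
      have h2 : ((-1 : ℂ)) ^ k * ζ ^ (k * q) = η ^ (k * m) := by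
        rw [← hζ2l, ← pow_mul, ← pow_add, he, pow_mul, hη4]
      rw [h1, ← h2]
      ring
    have hT2v : T2 = -∑ k ∈ Finset.range l, (jacobiSym k l : ℂ) * η ^ (k * m) := by
      rw [hT2even r hr, Finset.sum_congr rfl fun k _ => hterm k, Finset.sum_neg_distrib]
    have hG : (∑ k ∈ Finset.range l, (jacobiSym k l : ℂ) * η ^ (k * q))
        = ∑ k ∈ Finset.range l, (jacobiSym k l : ℂ) * η ^ (k * m) := by
      have h4m : 4 * m % l = q % l := by
        rw [← hm, Nat.add_mul_mod_self_right]
      rw [hη]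
      exact G_eq l hl hl2 m q h4m
    rw [hS2, hqeven, hT2v, hTl, hG]
    ring
  · -- q ≡ 0 mod 4
    intro hq4
    obtain ⟨r, hr⟩ : ∃ r, q = 2 * r := ⟨q / 2, by omega⟩
    have hreven : Even r := Nat.even_iff.mpr (by omega)
    obtain ⟨s, hs⟩ : ∃ s, q = 4 * s := ⟨q / 4, by omega⟩
    have hqeven : (-1 : ℂ) ^ q = 1 := (Nat.even_iff.mpr (by omega)).neg_one_pow
    have hterm : ∀ k : ℕ, (if Odd k then (1 : ℂ) else (-1) ^ r) *
        ((jacobiSym k l : ℂ) * ζ ^ (k * q)) = (jacobiSym k l : ℂ) * η ^ (k * s) := by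
      intro k
      have h1 : (if Odd k then (1 : ℂ) else (-1) ^ r) = 1 := by
        rw [hreven.neg_one_pow, ite_self]
      have h2 : ζ ^ (k * q) = η ^ (k * s) := by
        rw [show k * q = 4 * (k * s) by rw [hs]; ring, pow_mul, hη4]
      rw [h1, one_mul, h2]
    have hT2v : T2 = ∑ k ∈ Finset.range l, (jacobiSym k l : ℂ) * η ^ (k * s) := by
      rw [hT2even r hr, Finset.sum_congr rfl fun k _ => hterm k]
    have hG : (∑ k ∈ Finset.range l, (jacobiSym k l : ℂ) * η ^ (k * q))
        = ∑ k ∈ Finset.range l, (jacobiSym k l : ℂ) * η ^ (k * s) := by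
      rw [hη]
      exact G_eq l hl hl2 s q (by rw [hs])
    rw [hS2, hqeven, hT2v, hTl, hG]
    ring
end

section
/- Let l be a positive integer with l ≡ 3 (mod 4) and let q be a positive integer. Then: τ(χ^{(4l)}, q) = 0 if q is even; τ(χ^{(4l)}, q) = −2i·τ(χ_l, q) if q ≡ 1 (mod 4); and τ(χ^{(4l)}, q) = 2i·τ(χ_l, q) if q ≡ 3 (mod 4). -/
/-! For `l ≡ 3 (mod 4)`, quadratic reciprocity factors `χ^{(4l)} = χ₄ · χ_l`, with `χ₄` the
nontrivial character mod 4. Writing `j = a l + 4 b` (Chinese remainder theorem), the Gauss sum of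
a product of characters to coprime moduli splits, giving
`τ(χ^{(4l)}, q) = χ₄(l) τ(χ₄, q) · χ_l(4) τ(χ_l, q) = -τ(χ₄, q) τ(χ_l, q)`,
and `τ(χ₄, q) = e(q/4) - e(3q/4) = i^q - i^{3q} = 2i χ₄(q)`. -/

open Complex

open Finset ZMod

lemma Nat.eq_of_mul_add_mul_modEq {m n a a' b b' : ℕ} (hmn : m.Coprime n) (ha : a < m)
    (ha' : a' < m) (h : a * n + b * m ≡ a' * n + b' * m [MOD m]) : a = a' := by
  have hbm : b * m ≡ b' * m [MOD m] :=
    (Nat.modEq_zero_iff_dvd.2 (dvd_mul_left m b)).trans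
      (Nat.modEq_zero_iff_dvd.2 (dvd_mul_left m b')).symm
  exact ((Nat.ModEq.add_right_cancel hbm h).cancel_right_of_coprime hmn).eq_of_lt_of_lt ha ha'

theorem Finset.sum_range_mul_eq_sum_sum_of_coprime {M : Type*} [AddCommMonoid M] {m n : ℕ}
    (hmn : m.Coprime n) {h : ℕ → M} (hh : Function.Periodic h (m * n)) :
    ∑ j ∈ range (m * n), h j = ∑ a ∈ range m, ∑ b ∈ range n, h (a * n + b * m) := by
  set φ : ℕ × ℕ → ℕ := fun p => (p.1 * n + p.2 * m) % (m * n)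
  have hφ : Set.InjOn φ ↑(range m ×ˢ range n) := by
    rintro ⟨a, b⟩ hab ⟨a', b'⟩ hab' h
    simp only [coe_product, coe_range, Set.mem_prod, Set.mem_Iio] at hab hab'
    have h' : a * n + b * m ≡ a' * n + b' * m [MOD m * n] := h
    refine Prod.ext (Nat.eq_of_mul_add_mul_modEq hmn hab.1 hab'.1 (h'.of_mul_right n)) ?_
    rw [add_comm (a * n), add_comm (a' * n)] at h'
    exact Nat.eq_of_mul_add_mul_modEq hmn.symm hab.2 hab'.2 (h'.of_mul_left m)
  have himage : (range m ×ˢ range n).image φ = range (m * n) := by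
    refine eq_of_subset_of_card_le (fun j hj => ?_) ?_
    · obtain ⟨⟨a, b⟩, hab, rfl⟩ := mem_image.1 hj
      simp only [mem_product, mem_range] at hab
      exact mem_range.2 (Nat.mod_lt _ (Nat.mul_pos (by omega) (by omega)))
    · rw [card_image_of_injOn hφ, card_product, card_range, card_range, card_range]
  rw [← himage, sum_image hφ, sum_product]
  simp only [φ, hh.map_mod_nat]

lemma periodic_exp_two_pi_I_mul_div (N : ℕ) (q : ℤ) :
    Function.Periodic (fun j : ℕ => exp (2 * Real.pi * I * j * q / N)) N := by
  intro j
  rcases eq_or_ne N 0 with rfl | hN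
  · simp
  rw [exp_eq_exp_iff_exists_int]
  refine ⟨q, ?_⟩
  push_cast
  field_simp

theorem tauChar_mul_of_coprime {m n : ℕ} (hmn : m.Coprime n) {f g : ℕ → ℂ}
    (hf : Function.Periodic f m) (hg : Function.Periodic g n) (q : ℤ) :
    tauChar (m * n) (f * g) q =
      tauChar m (fun a => f (a * n)) q * tauChar n (fun b => g (b * m)) q := by
  have hfg : Function.Periodic (f * g) (m * n) := by
    have hf' := hf.nat_mul n
    have hg' := hg.nat_mul m
    rw [mul_comm] at hf'
    exact hf'.mul hg'
  have hsummand : Function.Periodic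
      (fun j : ℕ => (f * g) j * exp (2 * Real.pi * I * j * q / ↑(m * n))) (m * n) :=
    hfg.mul (periodic_exp_two_pi_I_mul_div _ q)
  rw [tauChar, sum_range_mul_eq_sum_sum_of_coprime hmn hsummand, tauChar, tauChar, sum_mul_sum]
  refine sum_congr rfl fun a ha => sum_congr rfl fun b hb => ?_
  have hm : (m : ℂ) ≠ 0 := Nat.cast_ne_zero.2 (Nat.ne_zero_of_lt (mem_range.1 ha))
  have hn : (n : ℂ) ≠ 0 := Nat.cast_ne_zero.2 (Nat.ne_zero_of_lt (mem_range.1 hb))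
  have hf' : f (a * n + b * m) = f (a * n) := hf.nat_mul b (a * n)
  have hg' : g (a * n + b * m) = g (b * m) := by
    rw [add_comm]; exact hg.nat_mul a (b * m)
  have hexp : exp (2 * Real.pi * I * ↑(a * n + b * m) * q / ↑(m * n)) =
      exp (2 * Real.pi * I * a * q / m) * exp (2 * Real.pi * I * b * q / n) := by
    rw [← exp_add]
    congr 1
    push_cast
    field_simp
  rw [Pi.mul_apply, hf', hg', hexp]
  ring

lemma periodic_χ₄ : Function.Periodic (fun j : ℕ => (χ₄ j : ℂ)) 4 := by
  intro j
  simp only [Nat.cast_add, ZMod.natCast_self, add_zero]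

lemma tauChar_neg (n : ℕ) (χ : ℕ → ℂ) (q : ℤ) : tauChar n (-χ) q = -tauChar n χ q := by
  simp only [tauChar, Pi.neg_apply, neg_mul, sum_neg_distrib]

theorem tauChar_χ₄ (q : ℤ) : tauChar 4 (fun a => (χ₄ a : ℂ)) q = 2 * I * χ₄ q := by
  have hexp : ∀ k : ℕ, exp (2 * Real.pi * I * k * q / (4 : ℕ)) = I ^ (k * q) := by
    intro k
    rw [show (2 * Real.pi * I * k * q / (4 : ℕ) : ℂ) = ((k * q : ℤ) : ℂ) * (Real.pi / 2 * I) by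
      push_cast; ring, exp_int_mul, exp_pi_div_two_mul_I]
  have hI : ∀ z : ℤ, I ^ z = I ^ (z % 4) := by
    intro z
    conv_lhs => rw [← Int.emod_add_mul_ediv z 4]
    rw [zpow_add₀ I_ne_zero, zpow_mul, zpow_ofNat, I_pow_four, one_zpow, mul_one]
  have hχ₀ : χ₄ (0 : ZMod 4) = 0 := by decide
  have hχ₂ : χ₄ (2 : ZMod 4) = 0 := by decide
  have hχ₃ : χ₄ (3 : ZMod 4) = -1 := by decide
  calc tauChar 4 (fun a => (χ₄ a : ℂ)) q = I ^ q - I ^ (3 * q) := by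
        simp only [tauChar, sum_range_succ, range_zero, sum_empty, hexp]
        simp only [Nat.cast_zero, Nat.cast_one, Nat.cast_ofNat, map_one, hχ₀, hχ₂, hχ₃]
        push_cast
        simp only [zero_mul, one_mul, zero_add, add_zero, neg_one_mul, sub_eq_add_neg]
    _ = I ^ (q % 4) - I ^ (3 * (q % 4) % 4) := by
        rw [hI q, hI (3 * q), Int.mul_emod]
        norm_num
    _ = 2 * I * χ₄ q := by
        rw [← intCast_mod q 4]
        have h0 := Int.emod_nonneg q (by norm_num : (4:ℤ) ≠ 0)
        have h4 := Int.emod_lt_of_pos q (by norm_num : (0:ℤ) < 4)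
        generalize q % 4 = r at *
        interval_cases r <;> simp [two_mul, sub_eq_add_neg]

lemma periodic_chiJacobi (n : ℕ) : Function.Periodic (chiJacobi n) n := by
  intro j
  simp only [chiJacobi]
  rw [jacobiSym.mod_left, jacobiSym.mod_left j]
  push_cast
  rw [Int.add_emod_right]

lemma chi4m_eq_χ₄_mul_chiJacobi {l : ℕ} (hl4 : l % 4 = 3) :
    chi4m l = (fun j : ℕ => (χ₄ j : ℂ)) * chiJacobi l := by
  funext j
  simp only [chi4m, chiJacobi, Pi.mul_apply]
  rcases Nat.even_or_odd j with hj | hj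
  · rw [if_neg (Nat.not_odd_iff_even.2 hj), χ₄_nat_eq_if_mod_four, if_pos (Nat.even_iff.1 hj)]
    simp
  rw [if_pos hj]
  rcases Nat.odd_mod_four_iff.1 (Nat.odd_iff.1 hj) with h1 | h3
  · rw [χ₄_nat_one_mod_four h1,
      jacobiSym.quadratic_reciprocity_one_mod_four h1 (Nat.odd_iff.2 (by omega))]
    simp
  · rw [χ₄_nat_three_mod_four h3, jacobiSym.quadratic_reciprocity_three_mod_four hl4 h3]
    push_cast
    ring

theorem tauChar_chi4m {l : ℕ} (hl4 : l % 4 = 3) (q : ℤ) :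
    tauChar (4 * l) (chi4m l) q = -2 * I * χ₄ q * tauChar l (chiJacobi l) q := by
  have hl2 : Nat.Coprime 2 l := Nat.coprime_two_left.2 (Nat.odd_iff.2 (by omega))
  have hco : Nat.Coprime 4 l := Nat.Coprime.pow_left 2 hl2
  have hχ₄ : (fun a : ℕ => (χ₄ (a * l : ℕ) : ℂ)) = -fun a : ℕ => (χ₄ a : ℂ) := by
    funext a
    rw [Nat.cast_mul, map_mul, χ₄_nat_three_mod_four hl4]
    simp
  have hJ : (fun b => chiJacobi l (b * 4)) = chiJacobi l := by
    funext b
    have h4 : jacobiSym 4 l = 1 :=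
      jacobiSym.sq_one' (a := 2) ((Int.gcd_natCast_natCast 2 l).trans hl2)
    simp only [chiJacobi, Nat.cast_mul, jacobiSym.mul_left, Nat.cast_ofNat, h4, mul_one]
  rw [chi4m_eq_χ₄_mul_chiJacobi hl4, tauChar_mul_of_coprime hco periodic_χ₄
    (periodic_chiJacobi l), hχ₄, hJ, tauChar_neg, tauChar_χ₄]
  ring

theorem gauss_sum_chi_four_l_of_l_three_mod_four_general (l : ℕ) (hl4 : l % 4 = 3)
    (q : ℕ) :
    (2 ∣ q → tauChar (4 * l) (chi4m l) q = 0) ∧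
    (q % 4 = 1 → tauChar (4 * l) (chi4m l) q = -2 * Complex.I * tauChar l (chiJacobi l) q) ∧
    (q % 4 = 3 → tauChar (4 * l) (chi4m l) q = 2 * Complex.I * tauChar l (chiJacobi l) q) := by
  rw [tauChar_chi4m hl4, Int.cast_natCast]
  refine ⟨fun h2 => ?_, fun h1 => ?_, fun h3 => ?_⟩
  · rw [χ₄_nat_eq_if_mod_four, if_pos (by omega)]
    simp
  · rw [χ₄_nat_one_mod_four h1]
    simp
  · rw [χ₄_nat_three_mod_four h3]
    simp

theorem gauss_sum_chi_four_l_of_l_three_mod_four (l : ℕ) (hl : 0 < l) (hl4 : l % 4 = 3)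
    (q : ℕ) (hq : 0 < q) :
    (2 ∣ q → tauChar (4 * l) (chi4m l) q = 0) ∧
    (q % 4 = 1 → tauChar (4 * l) (chi4m l) q = -2 * Complex.I * tauChar l (chiJacobi l) q) ∧
    (q % 4 = 3 → tauChar (4 * l) (chi4m l) q = 2 * Complex.I * tauChar l (chiJacobi l) q) :=
  gauss_sum_chi_four_l_of_l_three_mod_four_general l hl4 q
end

section
/- Let m and n be coprime odd positive integers and let q be any integer. Then G(χ_{mn}, q) = G(χ_m, q)·G(χ_n, q). -/
open Complex

/-- The normalized Gauss sum
`G(χ_n, q) = ((1−i)/2 + (−1/n)·(1+i)/2)·τ(χ_n, q)` for odd positive `n`. -/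
noncomputable def GJacobi (n : ℕ) (q : ℤ) : ℂ :=
  ((1 - Complex.I) / 2 + (jacobiSym (-1) n : ℂ) * (1 + Complex.I) / 2) * tauChar n (chiJacobi n) q

/-!
The substitution `j = a n + b m`, with `a` modulo `m` and `b` modulo `n`, runs over the residues
modulo `mn` (Chinese remainder theorem). Under it `e(jq/mn) = e(aq/m) e(bq/n)` and
`(j/mn) = (a/m)(n/m) · (b/n)(m/n)`, so `τ(χ_{mn}, q) = (n/m)(m/n) τ(χ_m, q) τ(χ_n, q)`.
By quadratic reciprocity `(n/m)(m/n) = (-1)^{(m-1)(n-1)/4}`, and this sign is exactly the defect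
of multiplicativity of the normalizing factor, which is `1` for `k ≡ 1` and `-i` for
`k ≡ 3 (mod 4)`.
-/

open Finset Function

theorem Nat.eq_of_add_mul_modEq_add_mul {m n a a' b b' : ℕ} (hmn : m.Coprime n)
    (h : a * n + b * m ≡ a' * n + b' * m [MOD m * n]) (ha : a < m) (ha' : a' < m) : a = a' := by
  have hmod : a * n ≡ a' * n [MOD m] := by
    simpa only [Nat.ModEq, Nat.add_mul_mod_self_right] using h.of_mul_right n
  exact (hmod.cancel_right_of_coprime hmn).eq_of_lt_of_lt ha ha'

theorem Function.Periodic.sum_range_mul_eq_sum_sum {M : Type*} [AddCommMonoid M] {f : ℕ → M}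
    {m n : ℕ} (hf : Periodic f (m * n)) (hmn : m.Coprime n) :
    ∑ j ∈ range (m * n), f j = ∑ a ∈ range m, ∑ b ∈ range n, f (a * n + b * m) := by
  set φ : ℕ × ℕ → ℕ := fun p => (p.1 * n + p.2 * m) % (m * n)
  have hinj : Set.InjOn φ ↑(range m ×ˢ range n) := by
    rintro ⟨a, b⟩ hab ⟨a', b'⟩ hab' h
    simp only [coe_product, Set.mem_prod, mem_coe, mem_range] at hab hab'
    have h' : b * m + a * n ≡ b' * m + a' * n [MOD n * m] := by
      rw [add_comm, add_comm (b' * m), mul_comm n]; exact h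
    exact Prod.ext (Nat.eq_of_add_mul_modEq_add_mul hmn h hab.1 hab'.1)
      (Nat.eq_of_add_mul_modEq_add_mul hmn.symm h' hab.2 hab'.2)
  have himage : (range m ×ˢ range n).image φ = range (m * n) := by
    refine eq_of_subset_of_card_le (fun j hj => ?_) (by rw [card_image_of_injOn hinj]; simp)
    obtain ⟨⟨a, b⟩, hab, rfl⟩ := mem_image.mp hj
    simp only [mem_product, mem_range] at hab
    exact mem_range.mpr (Nat.mod_lt _ (Nat.mul_pos (by omega) (by omega)))
  rw [← himage, sum_image hinj, sum_product]
  simp only [φ, hf.map_mod_nat]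

theorem periodic_cexp_two_pi_I_mul_div (q : ℤ) (k : ℕ) :
    Periodic (fun j : ℕ => exp (2 * Real.pi * I * j * q / k)) k := by
  intro j
  rcases eq_or_ne k 0 with rfl | hk
  · simp
  have hk' : (k : ℂ) ≠ 0 := Nat.cast_ne_zero.mpr hk
  have : 2 * Real.pi * I * ((j + k : ℕ) : ℂ) * q / k =
      2 * Real.pi * I * j * q / k + q * (2 * Real.pi * I) := by
    push_cast; field_simp
  simp only [this, exp_periodic.int_mul q _]

theorem cexp_two_pi_I_mul_add_mul_div_mul (q : ℤ) {m n : ℕ} (hm : m ≠ 0) (hn : n ≠ 0)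
    (a b : ℕ) :
    exp (2 * Real.pi * I * ((a * n + b * m : ℕ) : ℂ) * q / ((m * n : ℕ) : ℂ)) =
      exp (2 * Real.pi * I * a * q / m) * exp (2 * Real.pi * I * b * q / n) := by
  have hm' : (m : ℂ) ≠ 0 := Nat.cast_ne_zero.mpr hm
  have hn' : (n : ℂ) ≠ 0 := Nat.cast_ne_zero.mpr hn
  rw [← exp_add]
  push_cast
  field_simp

theorem tauChar_const_mul (k : ℕ) (c : ℂ) (χ : ℕ → ℂ) (q : ℤ) :
    tauChar k (fun j => c * χ j) q = c * tauChar k χ q := by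
  simp only [tauChar, mul_sum, mul_assoc]

theorem tauChar_mul_of_coprime_s5 {m n : ℕ} (hm : m ≠ 0) (hn : n ≠ 0) (hmn : m.Coprime n)
    {χ χ₁ χ₂ : ℕ → ℂ} (hχ : Periodic χ (m * n))
    (hsplit : ∀ a b, χ (a * n + b * m) = χ₁ a * χ₂ b) (q : ℤ) :
    tauChar (m * n) χ q = tauChar m χ₁ q * tauChar n χ₂ q := by
  have hper : Periodic (fun j : ℕ => χ j * exp (2 * Real.pi * I * j * q / (m * n : ℕ))) (m * n) :=
    hχ.mul (periodic_cexp_two_pi_I_mul_div q _)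
  rw [tauChar, hper.sum_range_mul_eq_sum_sum hmn, tauChar, tauChar, sum_mul_sum]
  refine sum_congr rfl fun a _ => sum_congr rfl fun b _ => ?_
  simp only [hsplit, cexp_two_pi_I_mul_add_mul_div_mul q hm hn]
  ring

theorem chiJacobi_periodic (k : ℕ) : Periodic (chiJacobi k) k := fun j => by
  simp only [chiJacobi, Nat.cast_add]
  rw [jacobiSym.mod_left' (a₂ := j) (by simp)]

theorem jacobiSym_mul_add_mul (a b : ℤ) (m n : ℕ) [NeZero m] [NeZero n] :
    jacobiSym (a * n + b * m) (m * n) =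
      jacobiSym a m * jacobiSym n m * (jacobiSym b n * jacobiSym m n) := by
  rw [jacobiSym.mul_right, jacobiSym.mod_left' (b := m) (a₂ := a * n) (by simp),
    jacobiSym.mod_left' (b := n) (a₂ := b * m) (by simp), jacobiSym.mul_left,
    jacobiSym.mul_left]

theorem tauChar_chiJacobi_mul {m n : ℕ} (hm : m ≠ 0) (hn : n ≠ 0) (hmn : m.Coprime n) (q : ℤ) :
    tauChar (m * n) (chiJacobi (m * n)) q =
      jacobiSym n m * jacobiSym m n * (tauChar m (chiJacobi m) q * tauChar n (chiJacobi n) q) := by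
  have : NeZero m := ⟨hm⟩
  have : NeZero n := ⟨hn⟩
  rw [tauChar_mul_of_coprime_s5 hm hn hmn (chiJacobi_periodic _)
    (χ₁ := fun a => jacobiSym n m * chiJacobi m a) (χ₂ := fun b => jacobiSym m n * chiJacobi n b),
    tauChar_const_mul, tauChar_const_mul]
  · ring
  · intro a b
    simp only [chiJacobi]
    push_cast
    rw [jacobiSym_mul_add_mul]
    push_cast
    ring

theorem jacobiSym_mul_jacobiSym_swap {m n : ℕ} (hm : Odd m) (hn : Odd n) (hmn : m.Coprime n) :
    jacobiSym n m * jacobiSym m n = (-1) ^ (m / 2 * (n / 2)) := by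
  rw [jacobiSym.quadratic_reciprocity hm hn, mul_left_comm, ← sq,
    jacobiSym.sq_one (by simpa using hmn.symm), mul_one]

theorem jacobiSym_neg_one_of_odd {k : ℕ} (hk : Odd k) :
    (jacobiSym (-1) k : ℂ) = (-1) ^ (k / 2) := by
  rw [jacobiSym.at_neg_one hk, ZMod.χ₄_eq_neg_one_pow (Nat.odd_iff.mp hk)]
  push_cast; rfl

noncomputable def gaussNormalizer (s : ℂ) : ℂ := (1 - I) / 2 + s * (1 + I) / 2

theorem GJacobi_eq (n : ℕ) (q : ℤ) :
    GJacobi n q = gaussNormalizer (jacobiSym (-1) n) * tauChar n (chiJacobi n) q :=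
  rfl

@[simp]
theorem gaussNormalizer_one : gaussNormalizer 1 = 1 := by
  simp only [gaussNormalizer]; ring

@[simp]
theorem gaussNormalizer_neg_one : gaussNormalizer (-1) = -I := by
  simp only [gaussNormalizer]; ring

theorem gaussNormalizer_mul_neg_one_pow (a b : ℕ) :
    gaussNormalizer ((-1) ^ a * (-1) ^ b) * (-1) ^ (a * b) =
      gaussNormalizer ((-1) ^ a) * gaussNormalizer ((-1) ^ b) := by
  rw [pow_mul]
  rcases Nat.even_or_odd a with ha | ha <;> rcases Nat.even_or_odd b with hb | hb <;>
    simp [ha.neg_one_pow, hb.neg_one_pow]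

theorem GJacobi_mul_general (m n : ℕ) (hmodd : Odd m) (hnodd : Odd n)
    (hcop : Nat.Coprime m n) (q : ℤ) :
    GJacobi (m * n) q = GJacobi m q * GJacobi n q := by
  have hm := hmodd.pos.ne'
  have hn := hnodd.pos.ne'
  have hsign : (jacobiSym n m : ℂ) * jacobiSym m n = (-1) ^ (m / 2 * (n / 2)) := by
    exact_mod_cast jacobiSym_mul_jacobiSym_swap hmodd hnodd hcop
  rw [GJacobi_eq, GJacobi_eq, GJacobi_eq, tauChar_chiJacobi_mul hm hn hcop, ← mul_assoc,
    ← mul_assoc, hsign, jacobiSym.mul_right' _ hm hn, Int.cast_mul,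
    jacobiSym_neg_one_of_odd hmodd, jacobiSym_neg_one_of_odd hnodd,
    gaussNormalizer_mul_neg_one_pow]
  ring

theorem GJacobi_mul (m n : ℕ) (hm : 0 < m) (hn : 0 < n) (hmodd : Odd m) (hnodd : Odd n)
    (hcop : Nat.Coprime m n) (q : ℤ) :
    GJacobi (m * n) q = GJacobi m q * GJacobi n q :=
  GJacobi_mul_general m n hmodd hnodd hcop q
end

section
/- Let n ≥ 1 be an integer that is not a perfect square and let χ be a Dirichlet character modulo n with χ(−1) = 1. Then for every complex s with Re(s) < 0, the series K(1−s, χ) = Σ_{q=1}^∞ τ(χ, q)·q^{−(1−s)} converges absolutely, and L(s, χ) = (π^{s−1/2} / n^{s}) · (Γ((1−s)/2) / Γ(s/2)) · K(1−s, χ), where L(s, χ) denotes the analytic continuation of the Dirichlet L-function Σ_{m≥1} χ(m) m^{−s}. -/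
open Complex

/-!
For even `χ` the Gauss sum `τ(χ, q)` is the discrete Fourier transform `𝓕 χ` at `q`, so
`K(w, χ)` is the Dirichlet series of `𝓕 χ`, which converges absolutely for `re w > 1` and equals
the L-function `L(w, 𝓕 χ)` there. The functional equation of `ZMod.LFunction` relates `L(s, χ)` to
`L(1 - s, 𝓕 χ)` and `L(1 - s, 𝓕 χ(-·))`; for even `χ` these coincide, and the two exponential
factors combine to a cosine, which the reflection and duplication formulas turn into the quotient
`Γℝ(1 - s) / Γℝ(s)`.
-/

open ZMod

open scoped Real

lemma Complex.Gammaℝ_one_sub_div_Gammaℝ (s : ℂ) :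
    Gammaℝ (1 - s) / Gammaℝ s = π ^ (s - 1 / 2) * (Gamma ((1 - s) / 2) / Gamma (s / 2)) := by
  rw [Gammaℝ_def, Gammaℝ_def, mul_div_mul_comm, ← cpow_sub _ _ (ofReal_ne_zero.mpr Real.pi_ne_zero)]
  ring_nf

namespace ZMod

lemma sum_eq_sum_range {M : Type*} [AddCommMonoid M] (n : ℕ) [NeZero n] (F : ZMod n → M) :
    ∑ j : ZMod n, F j = ∑ j ∈ Finset.range n, F j :=
  Finset.sum_bij' (fun j _ => j.val) (fun i _ => (i : ZMod n))
    (fun j _ => Finset.mem_range.mpr j.val_lt) (fun _ _ => Finset.mem_univ _)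
    (fun j _ => natCast_zmod_val j) (fun _ hi => val_natCast_of_lt (Finset.mem_range.mp hi))
    (fun j _ => by rw [natCast_zmod_val])

variable {N : ℕ} [NeZero N]

theorem LFunction_one_sub_of_even {Φ : ZMod N → ℂ} (hΦ : Φ.Even) {s : ℂ}
    (hs : ∀ n : ℕ, s ≠ -n) (hs' : Φ 0 = 0 ∨ s ≠ 1) :
    LFunction Φ (1 - s) = N ^ (s - 1) * (Gammaℝ s / Gammaℝ (1 - s)) * LFunction (𝓕 Φ) s := by
  have hs_odd (n : ℕ) : s ≠ -(2 * n + 1) := by exact_mod_cast hs (2 * n + 1)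
  have hcos : cexp (π * I * s / 2) + cexp (-π * I * s / 2) = 2 * cos (π * s / 2) := by
    rw [two_cos]; ring_nf
  rw [LFunction_one_sub Φ hs hs', show (fun x => Φ (-x)) = Φ from funext hΦ, ← add_mul, hcos,
    Gammaℝ_div_Gammaℝ_one_sub hs_odd, Gammaℂ_def]
  ring

end ZMod

lemma tauChar_eq_dft_neg {n : ℕ} [NeZero n] (Φ : ZMod n → ℂ) (q : ℤ) :
    tauChar n (fun j => Φ j) q = 𝓕 (fun x => Φ (-x)) q := by
  rw [dft_apply, ← Equiv.sum_comp (Equiv.neg (ZMod n)), sum_eq_sum_range, tauChar]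
  refine Finset.sum_congr rfl fun j _ => ?_
  rw [Equiv.neg_apply, neg_neg, neg_mul, neg_neg, smul_eq_mul, mul_comm,
    show (j * q : ZMod n) = ((j * q : ℤ) : ZMod n) by push_cast; rfl, stdAddChar_coe]
  push_cast
  ring_nf

lemma tauChar_div_cpow_eq_term_dft {n : ℕ} [NeZero n] {Φ : ZMod n → ℂ} (hΦ : Φ.Even) {w : ℂ}
    (hw : w ≠ 0) :
    (fun q : ℕ => tauChar n (fun j => Φ j) q / (q : ℂ) ^ w) = LSeries.term (fun q => 𝓕 Φ q) w := by
  ext q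
  rw [LSeries.term_of_ne_zero' hw, tauChar_eq_dft_neg, show (fun x => Φ (-x)) = Φ from funext hΦ,
    Int.cast_natCast]

theorem functional_equation_nonsquare_modulus_general (n : ℕ) (hn : 0 < n)
    (χ : DirichletCharacter ℂ n) (hχ : χ (-1) = 1) (s : ℂ) (hs : s.re < 0) :
    Summable (fun q : ℕ => ‖tauChar n (fun j => χ (j : ZMod n)) q / (q : ℂ) ^ (1 - s)‖) ∧
    (haveI : NeZero n := ⟨hn.ne'⟩; DirichletCharacter.LFunction χ s) =
      (Real.pi : ℂ) ^ (s - 1 / 2) / (n : ℂ) ^ s *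
        (Complex.Gamma ((1 - s) / 2) / Complex.Gamma (s / 2)) *
        ∑' q : ℕ, tauChar n (fun j => χ (j : ZMod n)) q / (q : ℂ) ^ (1 - s) := by
  have : NeZero n := ⟨hn.ne'⟩
  have hw : 1 < (1 - s).re := by rw [sub_re, one_re]; linarith
  have hχ_even : Function.Even χ := DirichletCharacter.Even.to_fun hχ
  have hK := tauChar_div_cpow_eq_term_dft hχ_even (ne_zero_of_one_lt_re hw)
  refine ⟨summable_norm_iff.mpr (hK ▸ LSeriesSummable_of_one_lt_re _ hw), ?_⟩
  have hFE := LFunction_one_sub_of_even hχ_even (s := 1 - s)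
    (fun m h => by rw [h, neg_re, natCast_re] at hw; linarith [m.cast_nonneg (α := ℝ)])
    (Or.inr fun h => by rw [h, one_re] at hw; exact hw.false)
  rw [sub_sub_cancel, sub_sub_cancel_left, LFunction_eq_LSeries _ hw] at hFE
  change LFunction χ s = _
  rw [hFE, hK, ← LSeries, Gammaℝ_one_sub_div_Gammaℝ, cpow_neg]
  ring

theorem functional_equation_nonsquare_modulus (n : ℕ) (hn : 0 < n) (hsq : ¬ IsSquare n)
    (χ : DirichletCharacter ℂ n) (hχ : χ (-1) = 1) (s : ℂ) (hs : s.re < 0) :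
    Summable (fun q : ℕ => ‖tauChar n (fun j => χ (j : ZMod n)) q / (q : ℂ) ^ (1 - s)‖) ∧
    (haveI : NeZero n := ⟨hn.ne'⟩; DirichletCharacter.LFunction χ s) =
      (Real.pi : ℂ) ^ (s - 1 / 2) / (n : ℂ) ^ s *
        (Complex.Gamma ((1 - s) / 2) / Complex.Gamma (s / 2)) *
        ∑' q : ℕ, tauChar n (fun j => χ (j : ZMod n)) q / (q : ℂ) ^ (1 - s) :=
  functional_equation_nonsquare_modulus_general n hn χ hχ s hs
end

section
/- Let n be an odd positive integer and let s, w be complex numbers with Re(s) > 1/2 and Re(w) > 0. Then the series Σ_{h ≥ 1, h odd} h^{−2s} · Π_{p | h, p prime} (1 − χ_n(p) p^{−w}) converges absolutely and equals the Euler product Π_{p odd prime} (1 − χ_n(p) p^{−2s−w}) / (1 − p^{−2s}). -/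
/-!
The summand is multiplicative in `h` and supported on odd `h`. Each factor
`1 - χ_n(p) p^{-w}` has modulus at most `2` and `2^{ω(h)} ≤ d(h)`, so the summand is
bounded by `d(h) h^{-2 Re s}`, whose series is `ζ(2 Re s)^2`; hence the series converges
absolutely and equals its Euler product. At an odd prime `p`, with `y = p^{-2s}` and
`c = 1 - χ_n(p) p^{-w}`, the local factor is `1 + c (y + y^2 + ⋯) = (1 - (1 - c) y) / (1 - y)`;
at `p = 2` it is `1`.
-/

open Complex Finset

theorem Nat.two_pow_card_primeFactors_le_card_divisors {h : ℕ} (hh : h ≠ 0) :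
    2 ^ #h.primeFactors ≤ #h.divisors := by
  rw [Nat.card_divisors hh, ← prod_const]
  exact prod_le_prod' fun p hp => Nat.succ_le_succ <|
    (Nat.prime_of_mem_primeFactors hp).factorization_pos_of_dvd hh (Nat.dvd_of_mem_primeFactors hp)

theorem summable_card_divisors_div_rpow {σ : ℝ} (hσ : 1 < σ) :
    Summable fun h : ℕ => (#h.divisors : ℝ) / (h : ℝ) ^ σ := by
  have h1 : LSeriesSummable 1 σ := LSeriesSummable_one_iff.mpr (by simpa using hσ)
  refine (h1.convolution h1).norm.congr fun h => ?_
  rcases eq_or_ne h 0 with rfl | hh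
  · simp
  rw [LSeries.term_of_ne_zero hh, LSeries.convolution_def, norm_div,
    norm_natCast_cpow_of_pos (Nat.pos_of_ne_zero hh), ofReal_re]
  simp [← Nat.map_div_right_divisors]

noncomputable def oddSummand (c : ℕ → ℂ) (z : ℂ) (h : ℕ) : ℂ :=
  if Odd h then (h : ℂ) ^ (-z) * ∏ p ∈ h.primeFactors, c p else 0

section

variable (c : ℕ → ℂ) (z : ℂ)

@[simp] lemma oddSummand_zero : oddSummand c z 0 = 0 := by simp [oddSummand]

@[simp] lemma oddSummand_one : oddSummand c z 1 = 1 := by simp [oddSummand]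

lemma oddSummand_mul_of_coprime {m k : ℕ} (hmk : m.Coprime k) :
    oddSummand c z (m * k) = oddSummand c z m * oddSummand c z k := by
  rcases eq_or_ne m 0 with rfl | hm
  · simp [(Nat.coprime_zero_left k).mp hmk]
  rcases eq_or_ne k 0 with rfl | hk
  · simp [(Nat.coprime_zero_right m).mp hmk]
  by_cases hodd : Odd m ∧ Odd k
  · simp only [oddSummand, if_pos (Nat.odd_mul.mpr hodd), if_pos hodd.1, if_pos hodd.2]
    rw [Nat.cast_mul, natCast_mul_natCast_cpow, Nat.primeFactors_mul hm hk,
      prod_union hmk.disjoint_primeFactors]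
    ring
  · rw [oddSummand, if_neg (Nat.odd_mul.not.mpr hodd)]
    rcases not_and_or.mp hodd with h | h <;> simp [oddSummand, h]

lemma oddSummand_prime_pow {p : ℕ} (hp : p.Prime) (hpo : Odd p) (e : ℕ) :
    oddSummand c z (p ^ e) = c p * ((p : ℂ) ^ (-z)) ^ e + if e = 0 then 1 - c p else 0 := by
  cases e with
  | zero => simp
  | succ e =>
    rw [oddSummand, if_pos hpo.pow, Nat.primeFactors_prime_pow e.succ_ne_zero hp, prod_singleton,
      Nat.cast_pow, ← natCast_cpow_natCast_mul, cpow_nat_mul, if_neg e.succ_ne_zero]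
    ring

lemma hasSum_oddSummand_prime_pow {p : ℕ} (hp : p.Prime) (hpo : Odd p) (hz : 0 < z.re) :
    HasSum (fun e => oddSummand c z (p ^ e))
      ((1 - (1 - c p) * (p : ℂ) ^ (-z)) / (1 - (p : ℂ) ^ (-z))) := by
  have hy : ‖(p : ℂ) ^ (-z)‖ < 1 := by
    rw [norm_natCast_cpow_of_pos hp.pos, neg_re]
    exact Real.rpow_lt_one_of_one_lt_of_neg (mod_cast hp.one_lt) (neg_lt_zero.mpr hz)
  have hy1 : 1 - (p : ℂ) ^ (-z) ≠ 0 := sub_ne_zero.mpr fun h => by simp [← h] at hy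
  have hsum : (1 - (1 - c p) * (p : ℂ) ^ (-z)) / (1 - (p : ℂ) ^ (-z)) =
      c p * (1 - (p : ℂ) ^ (-z))⁻¹ + (1 - c p) := by
    field_simp
    ring
  rw [funext (oddSummand_prime_pow c z hp hpo), hsum]
  exact ((hasSum_geometric_of_norm_lt_one hy).mul_left (c p)).add (hasSum_ite_eq 0 (1 - c p))

lemma tsum_oddSummand_two_pow : ∑' e, oddSummand c z (2 ^ e) = 1 := by
  rw [tsum_eq_single 0 fun e he => ?_]
  · simp
  · simp [oddSummand, Nat.not_odd_iff_even, Nat.even_pow, he]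

variable {c}

lemma norm_oddSummand_le (hc : ∀ p, p.Prime → ‖c p‖ ≤ 2) (h : ℕ) :
    ‖oddSummand c z h‖ ≤ #h.divisors / (h : ℝ) ^ z.re := by
  rcases eq_or_ne h 0 with rfl | hh
  · simp
  unfold oddSummand
  split_ifs
  · rw [norm_mul, norm_natCast_cpow_of_pos (Nat.pos_of_ne_zero hh), neg_re,
      Real.rpow_neg (Nat.cast_nonneg _), div_eq_inv_mul, norm_prod]
    gcongr
    calc ∏ p ∈ h.primeFactors, ‖c p‖
        ≤ ∏ p ∈ h.primeFactors, (2 : ℝ) :=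
          prod_le_prod (fun _ _ => norm_nonneg _) fun p hp =>
            hc p (Nat.prime_of_mem_primeFactors hp)
      _ ≤ #h.divisors := by
          rw [prod_const]; exact_mod_cast Nat.two_pow_card_primeFactors_le_card_divisors hh
  · rw [norm_zero]; positivity

lemma summable_norm_oddSummand (hc : ∀ p, p.Prime → ‖c p‖ ≤ 2) (hz : 1 < z.re) :
    Summable (‖oddSummand c z ·‖) :=
  (summable_card_divisors_div_rpow hz).of_nonneg_of_le (fun _ => norm_nonneg _)
    (norm_oddSummand_le z hc)

theorem hasProd_oddSummand (hc : ∀ p, p.Prime → ‖c p‖ ≤ 2) (hz : 1 < z.re) :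
    HasProd (fun p : {p : ℕ // p.Prime ∧ Odd p} =>
      (1 - (1 - c p) * (p : ℂ) ^ (-z)) / (1 - (p : ℂ) ^ (-z))) (∑' h, oddSummand c z h) := by
  have hfactor : {p | p.Prime}.mulIndicator (fun p => ∑' e, oddSummand c z (p ^ e)) =
      {p | p.Prime ∧ Odd p}.mulIndicator
        fun p => (1 - (1 - c p) * (p : ℂ) ^ (-z)) / (1 - (p : ℂ) ^ (-z)) := by
    ext p
    simp only [Set.mulIndicator_apply, Set.mem_ofPred_eq]
    by_cases hp : p.Prime
    · rcases hp.eq_two_or_odd' with rfl | hpo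
      · simp [tsum_oddSummand_two_pow]
      · simp [hp, hpo, (hasSum_oddSummand_prime_pow c z hp hpo (by linarith)).tsum_eq]
    · simp [hp]
  have h := EulerProduct.eulerProduct_hasProd_mulIndicator (oddSummand_one c z)
    (oddSummand_mul_of_coprime c z) (summable_norm_oddSummand z hc hz) (oddSummand_zero c z)
  rw [hfactor, ← hasProd_subtype_iff_mulIndicator] at h
  exact h

end

theorem euler_product_sum_over_odd_h_general (n : ℕ)
    (s w : ℂ) (hs : 1 / 2 < s.re) (hw : 0 < w.re) :
    Summable (fun h : ℕ =>
      ‖if Odd h then (h : ℂ) ^ (-(2 * s)) *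
          ∏ p ∈ h.primeFactors, (1 - (jacobiSym p n : ℂ) * (p : ℂ) ^ (-w))
        else 0‖) ∧
    (∑' h : ℕ, if Odd h then (h : ℂ) ^ (-(2 * s)) *
        ∏ p ∈ h.primeFactors, (1 - (jacobiSym p n : ℂ) * (p : ℂ) ^ (-w))
      else 0) =
      ∏' p : {p : ℕ // p.Prime ∧ Odd p},
        (1 - (jacobiSym p n : ℂ) * (p : ℂ) ^ (-(2 * s) - w)) / (1 - (p : ℂ) ^ (-(2 * s))) := by
  set c : ℕ → ℂ := fun p => 1 - (jacobiSym p n : ℂ) * (p : ℂ) ^ (-w)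
  have hz : 1 < (2 * s).re := by simpa using (by linarith : 1 < 2 * s.re)
  have hc (p : ℕ) (hp : p.Prime) : ‖c p‖ ≤ 2 := by
    have hχ : ‖(jacobiSym p n : ℂ)‖ ≤ 1 := by
      rcases jacobiSym.trichotomy p n with h | h | h <;> simp [h]
    have hpw : ‖(p : ℂ) ^ (-w)‖ ≤ 1 := by
      rw [norm_natCast_cpow_of_pos hp.pos, neg_re]
      exact Real.rpow_le_one_of_one_le_of_nonpos (mod_cast hp.one_lt.le) (by linarith)
    calc ‖c p‖ ≤ ‖(1 : ℂ)‖ + ‖(jacobiSym p n : ℂ)‖ * ‖(p : ℂ) ^ (-w)‖ :=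
          (norm_sub_le _ _).trans_eq (by rw [norm_mul])
      _ ≤ 1 + 1 * 1 := by rw [norm_one]; gcongr
      _ = 2 := by norm_num
  refine ⟨summable_norm_oddSummand _ hc hz,
    (hasProd_oddSummand _ hc hz).tprod_eq.symm.trans (tprod_congr fun p => ?_)⟩
  rw [sub_eq_add_neg (-(2 * s)), cpow_add _ _ (Nat.cast_ne_zero.mpr p.2.1.ne_zero)]
  ring

theorem euler_product_sum_over_odd_h (n : ℕ) (hn : 0 < n) (hnodd : Odd n)
    (s w : ℂ) (hs : 1 / 2 < s.re) (hw : 0 < w.re) :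
    Summable (fun h : ℕ =>
      ‖if Odd h then (h : ℂ) ^ (-(2 * s)) *
          ∏ p ∈ h.primeFactors, (1 - (jacobiSym p n : ℂ) * (p : ℂ) ^ (-w))
        else 0‖) ∧
    (∑' h : ℕ, if Odd h then (h : ℂ) ^ (-(2 * s)) *
        ∏ p ∈ h.primeFactors, (1 - (jacobiSym p n : ℂ) * (p : ℂ) ^ (-w))
      else 0) =
      ∏' p : {p : ℕ // p.Prime ∧ Odd p},
        (1 - (jacobiSym p n : ℂ) * (p : ℂ) ^ (-(2 * s) - w)) / (1 - (p : ℂ) ^ (-(2 * s))) :=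
  euler_product_sum_over_odd_h_general n s w hs hw
end
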